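/- Let f : 𝔘 → [0,1] be measurable, and let 𝒞 and 𝓑 be measurable ordered partitions of 𝔘 associated to partitions 𝒞* and 𝓑* of N = {1,…,n}, with 𝒞 ≤_ref 𝓑 (every set of 𝒞 is a union of sets of 𝓑). Then the censored integral estimators satisfy W_CI^𝓑 ≤_cx W_CI^𝒞. -/

import Mathlib

open MeasureTheory ProbabilityTheory

/-- A measurable ordered partition of `𝔘` associated to a partition of `N = {1,…,n}`
(modelled as `Fin n`).  The partition of `Fin n` is encoded by the fiber map `idx`:
the block `B*` corresponding to the stratum `sets i` is the fiber `{j | idx j = i}`,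
so that `P(U ∈ B_i) = |B_i*| / n` with every `|B_i*|` a positive integer. -/
structure StratPart (𝔘 : Type*) [MeasurableSpace 𝔘] (μ : Measure 𝔘) (n : ℕ) where
  b : ℕ
  sets : Fin b → Set 𝔘
  meas : ∀ i, MeasurableSet (sets i)
  disj : Pairwise (Function.onFun Disjoint sets)
  cover : (⋃ i, sets i) = Set.univ
  idx : Fin n → Fin b
  idx_surj : Function.Surjective idx
  prob : ∀ i, μ (sets i) =
    ((Finset.univ.filter fun j => idx j = i).card : ENNReal) / (n : ENNReal)

/-- `|B_i*|`, the number of sample indices assigned to stratum `i`. -/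
def StratPart.blockCard {𝔘 : Type*} [MeasurableSpace 𝔘] {μ : Measure 𝔘} {n : ℕ}
    (B : StratPart 𝔘 μ n) (i : Fin B.b) : ℕ :=
  (Finset.univ.filter fun j => B.idx j = i).card

/-- `C ≤_ref B` : every set of `C` is a union of sets of `B`, with the associated
partitions of `Fin n` refining compatibly. -/
def StratPart.Refines {𝔘 : Type*} [MeasurableSpace 𝔘] {μ : Measure 𝔘} {n : ℕ}
    (C B : StratPart 𝔘 μ n) : Prop :=
  ∃ ρ : Fin B.b → Fin C.b, (∀ i, B.sets i ⊆ C.sets (ρ i)) ∧ ∀ j, C.idx j = ρ (B.idx j)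

/-- A censored stratified sample: the pairs `(V_j, T_j)` are independent across `j`,
`V_j` has the conditional law `P_{U|B}` of the stratum of `j`, `T_j` is uniform on `[0,1]`,
and `V_j` is independent of `T_j` (the law of the pair is the product law). -/
def IsCensoredStratSample {Ω 𝔘 : Type*} [MeasurableSpace Ω] [MeasurableSpace 𝔘]
    {μ : Measure 𝔘} {n : ℕ} (B : StratPart 𝔘 μ n) (P : Measure Ω)
    (V : Fin n → Ω → 𝔘) (T : Fin n → Ω → ℝ) : Prop :=
  (∀ j, Measurable (V j)) ∧ (∀ j, Measurable (T j)) ∧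
    iIndepFun (fun j ω => (V j ω, T j ω)) P ∧
    ∀ j, Measure.map (fun ω => (V j ω, T j ω)) P =
      (μ[|B.sets (B.idx j)]).prod (volume.restrict (Set.Icc (0:ℝ) 1))

/-- The censored maximum estimator `W_CS^𝓑 = max {T_j : j ∈ S^𝓑}`, equal to `0` when
`S^𝓑 = {j : T_j ≤ f(V_j)}` is empty (the empty supremum in `ℝ` is `0`). -/
noncomputable def WCS {Ω 𝔘 : Type*} {n : ℕ} (f : 𝔘 → ℝ) (V : Fin n → Ω → 𝔘)
    (T : Fin n → Ω → ℝ) (ω : Ω) : ℝ :=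
  ⨆ j : {j : Fin n // T j ω ≤ f (V j ω)}, T j.1 ω

/-- The censored integral estimator `W_CI^𝓑 = (1/n) Σ_{B ∈ 𝓑} Σ_{j ∈ B*} 1{T_j ≤ f(V_j^B)}`. -/
noncomputable def WCI {Ω 𝔘 : Type*} {n : ℕ} (f : 𝔘 → ℝ) (V : Fin n → Ω → 𝔘)
    (T : Fin n → Ω → ℝ) (ω : Ω) : ℝ :=
  (n : ℝ)⁻¹ * ∑ j, if T j ω ≤ f (V j ω) then (1 : ℝ) else 0

/-!
Conditionally on the strata, the indicators `1{T_j ≤ f(V_j)}` are independent Bernoulli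
variables whose success probability is the conditional mean of `f` on the stratum of `j`, so
`E[φ(W_CI)] = E[φ(S/n)]` for a Poisson-binomial count `S`. Coarsening `𝓑` to `𝒞` replaces these
probabilities by their averages over the blocks of `𝒞`. As a function of two of the success
probabilities with fixed sum, `E[φ(S/n)]` is affine and increasing in their product, the
coefficient being an average of second differences of `φ`, which are nonnegative for convex `φ`.
Hence each transfer that moves one probability of a block onto the block average, compensating
at an index of the same block lying on the other side of that average, does not decrease
`E[φ(S/n)]`, and finitely many transfers turn the `𝓑`-probabilities into the `𝒞`-probabilities.
-/

open Finset

section PoissonBinomial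

variable {ι : Type*} [Fintype ι] [DecidableEq ι]

/-- `E[ψ(S)]` for `S` the number of successes in independent Bernoulli trials with success
probabilities `p k`. -/
noncomputable def poissonBinomialExpectation (ψ : ℕ → ℝ) (p : ι → ℝ) : ℝ :=
  ∑ ε : ι → Bool, (∏ k, if ε k then p k else 1 - p k) * ψ #{k | ε k}

open Classical in
theorem ProbabilityTheory.iIndepFun.integral_card_mem_eq {Ω β : Type*} [MeasurableSpace Ω]
    [MeasurableSpace β] {P : Measure Ω} {Y : ι → Ω → β} (hY : ∀ j, Measurable (Y j))
    (hind : iIndepFun Y P) {s : Set β} (hs : MeasurableSet s) (ψ : ℕ → ℝ) :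
    ∫ ω, ψ #{j | Y j ω ∈ s} ∂P =
      poissonBinomialExpectation ψ (fun j => P.real (Y j ⁻¹' s)) := by
  have := hind.isProbabilityMeasure
  set E : Ω → ι → Bool := fun ω j => decide (Y j ω ∈ s)
  have hE : Measurable E :=
    measurable_pi_lambda _ fun j => measurable_to_bool (by convert hY j hs; ext; simp [E])
  have hfiber (ε : ι → Bool) : E ⁻¹' {ε} = ⋂ j, Y j ⁻¹' (if ε j then s else sᶜ) := by
    ext ω
    simp only [Set.mem_preimage, Set.mem_singleton_iff, Set.mem_iInter, funext_iff, E]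
    refine forall_congr' fun j => ?_
    cases ε j <;> simp
  have hprob (ε : ι → Bool) : P.real (E ⁻¹' {ε}) =
      ∏ j, if ε j then P.real (Y j ⁻¹' s) else 1 - P.real (Y j ⁻¹' s) := by
    rw [hfiber, measureReal_def, hind.meas_iInter fun j => ⟨_, ?_, rfl⟩, ENNReal.toReal_prod]
    · refine prod_congr rfl fun j _ => ?_
      cases ε j
      · simp [Set.preimage_compl, ← measureReal_def, measureReal_compl (hY j hs)]
      · simp [measureReal_def]
    · cases ε j
      exacts [hs.compl, hs]
  calc ∫ ω, ψ #{j | Y j ω ∈ s} ∂P = ∫ ω, ψ #{j | E ω j} ∂P := by simp [E]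
    _ = ∫ ε, ψ #{j | ε j} ∂(P.map E) :=
      (integral_map (f := fun ε : ι → Bool => ψ #{j | ε j}) hE.aemeasurable
        Measurable.of_discrete.aestronglyMeasurable).symm
    _ = ∑ ε, P.real (E ⁻¹' {ε}) * ψ #{j | ε j} := by
      rw [integral_fintype Integrable.of_finite]
      simp [map_measureReal_apply hE (measurableSet_singleton _)]
    _ = _ := by simp only [hprob, poissonBinomialExpectation]

theorem poissonBinomialExpectation_eq_split (ψ : ℕ → ℝ) (p : ι → ℝ) (i : ι) :
    poissonBinomialExpectation ψ p =
      p i * poissonBinomialExpectation (fun m => ψ (m + 1)) (fun k : {k // k ≠ i} => p k) +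
        (1 - p i) * poissonBinomialExpectation ψ (fun k : {k // k ≠ i} => p k) := by
  set e := (Equiv.funSplitAt i Bool).symm
  have he_self (b g) : e (b, g) i = b := by simp [e]
  have he_ne (b g) (k : {k // k ≠ i}) : e (b, g) k = g k := by simp [e, k.2]
  have hcard (b g) : #{k | e (b, g) k} = #{k | g k} + if b then 1 else 0 := by
    simp only [card_filter, Fintype.sum_eq_add_sum_subtype_ne _ i, he_self, he_ne, add_comm]
  rw [poissonBinomialExpectation, ← e.sum_comp, Fintype.sum_prod_type, Fintype.sum_bool,
    poissonBinomialExpectation, poissonBinomialExpectation, mul_sum, mul_sum]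
  congr 1 <;> refine sum_congr rfl fun g _ => ?_ <;>
    simp [Fintype.prod_eq_mul_prod_subtype_ne _ i, hcard, he_self, he_ne, mul_assoc]

theorem poissonBinomialExpectation_nonneg {ψ : ℕ → ℝ} {p : ι → ℝ} (hψ : ∀ m, 0 ≤ ψ m)
    (hp : ∀ k, p k ∈ Set.Icc 0 1) : 0 ≤ poissonBinomialExpectation ψ p := by
  refine sum_nonneg fun ε _ => mul_nonneg (prod_nonneg fun k _ => ?_) (hψ _)
  have := hp k
  split_ifs <;> simp only [sub_nonneg, this.1, this.2]

theorem poissonBinomialExpectation_update_update {i j : ι} (hij : i ≠ j) (ψ : ℕ → ℝ)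
    (p : ι → ℝ) (a b : ℝ) :
    let r : {k : {k // k ≠ i} // k ≠ ⟨j, hij.symm⟩} → ℝ := fun k => p k
    poissonBinomialExpectation ψ (Function.update (Function.update p i a) j b) =
      (1 - a) * (1 - b) * poissonBinomialExpectation ψ r +
        (a * (1 - b) + (1 - a) * b) * poissonBinomialExpectation (fun m => ψ (m + 1)) r +
          a * b * poissonBinomialExpectation (fun m => ψ (m + 2)) r := by
  intro r
  have hr : (fun k : {k : {k // k ≠ i} // k ≠ ⟨j, hij.symm⟩} =>
      Function.update (Function.update p i a) j b k) = r := by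
    funext k
    have hkj : (k : ι) ≠ j := fun h => k.2 (Subtype.ext h)
    simp [r, Function.update_of_ne hkj, Function.update_of_ne k.1.2]
  rw [poissonBinomialExpectation_eq_split _ _ i,
    poissonBinomialExpectation_eq_split ψ _ (⟨j, hij.symm⟩ : {k // k ≠ i}),
    poissonBinomialExpectation_eq_split (fun m => ψ (m + 1)) _ (⟨j, hij.symm⟩ : {k // k ≠ i})]
  simp only [Function.update_self, Function.update_of_ne hij, hr]
  ring

theorem poissonBinomialExpectation_update_update_le {ψ : ℕ → ℝ}
    (hψ : ∀ m, 2 * ψ (m + 1) ≤ ψ m + ψ (m + 2)) {i j : ι} (hij : i ≠ j) {p : ι → ℝ}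
    (hp : ∀ k, p k ∈ Set.Icc 0 1) {a b a' b' : ℝ} (hsum : a + b = a' + b')
    (hprod : a * b ≤ a' * b') :
    poissonBinomialExpectation ψ (Function.update (Function.update p i a) j b) ≤
      poissonBinomialExpectation ψ (Function.update (Function.update p i a') j b') := by
  simp only [poissonBinomialExpectation_update_update hij]
  set r : {k : {k // k ≠ i} // k ≠ ⟨j, hij.symm⟩} → ℝ := fun k => p k
  have hsecond : 0 ≤ poissonBinomialExpectation ψ r -
      2 * poissonBinomialExpectation (fun m => ψ (m + 1)) r +
        poissonBinomialExpectation (fun m => ψ (m + 2)) r := by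
    convert poissonBinomialExpectation_nonneg (p := r) (fun m => sub_nonneg.2 (hψ m))
      fun k => hp _ using 1
    simp only [poissonBinomialExpectation, mul_sum, ← sum_sub_distrib, ← sum_add_distrib]
    exact sum_congr rfl fun _ _ => by ring
  linear_combination mul_nonneg (sub_nonneg.2 hprod) hsecond +
    (poissonBinomialExpectation (fun m => ψ (m + 1)) r - poissonBinomialExpectation ψ r) * hsum

end PoissonBinomial

theorem Finset.exists_mul_neg_of_sum_eq_zero {ι R : Type*} [CommRing R] [LinearOrder R]
    [IsStrictOrderedRing R] {s : Finset ι} {d : ι → R} (hs : ∑ j ∈ s, d j = 0) {i : ι}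
    (hi : i ∈ s) (hdi : d i ≠ 0) : ∃ j ∈ s, d i * d j < 0 := by
  obtain ⟨j, hj, hpos⟩ := exists_pos_of_sum_zero_of_exists_nonzero (fun j => -(d i * d j))
    (by simp [← mul_sum, hs]) ⟨i, hi, by simpa using hdi⟩
  exact ⟨j, hj, neg_pos.1 hpos⟩

theorem Finset.sum_update_update_of_add_eq {ι M : Type*} [DecidableEq ι] [AddCommGroup M]
    {s : Finset ι} {i j : ι} (hij : i ≠ j) (hs : i ∈ s ↔ j ∈ s) (p : ι → M) {a b : M}
    (hab : a + b = p i + p j) :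
    ∑ k ∈ s, Function.update (Function.update p i a) j b k = ∑ k ∈ s, p k := by
  by_cases hi : i ∈ s
  · have hj := hs.1 hi
    have hi' : i ∈ s \ {j} := mem_sdiff.2 ⟨hi, by simpa using hij⟩
    rw [sum_update_of_mem hj, sum_update_of_mem hi', sum_eq_add_sum_sdiff_singleton_of_mem hj,
      sum_eq_add_sum_sdiff_singleton_of_mem hi', ← add_assoc, ← add_assoc, add_comm b, hab,
      add_comm (p j)]
  · refine sum_congr rfl fun k hk => ?_
    rw [Function.update_of_ne (by rintro rfl; exact hi (hs.2 hk)),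
      Function.update_of_ne (by rintro rfl; exact hi hk)]

section Majorization

variable {ι κ : Type*} [Fintype ι] [DecidableEq ι] [DecidableEq κ] {ψ : ℕ → ℝ}
  {π : ι → κ} {q : κ → ℝ} {p : ι → ℝ}

/-- The deviations `q (π k) - p k` sum to zero over the fiber of `i`, so some `j` there deviates
in the opposite direction; the transfer keeps `p i + p j` and increases `p i * p j`. -/
theorem exists_transfer_step (hψ : ∀ m, 2 * ψ (m + 1) ≤ ψ m + ψ (m + 2))
    (hp : ∀ k, p k ∈ Set.Icc 0 1)
    (hsum : ∀ c, ∑ j with π j = c, p j = ∑ j with π j = c, q (π j))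
    {i : ι} (hi : p i ≠ q (π i)) :
    ∃ p' : ι → ℝ, (∀ k, p' k ∈ Set.Icc 0 1) ∧
      (∀ c, ∑ j with π j = c, p' j = ∑ j with π j = c, q (π j)) ∧
      #{j | p' j ≠ q (π j)} < #{j | p j ≠ q (π j)} ∧
      poissonBinomialExpectation ψ p ≤ poissonBinomialExpectation ψ p' := by
  obtain ⟨j, hj, hneg⟩ := exists_mul_neg_of_sum_eq_zero (s := {j | π j = π i})
    (d := fun k => q (π k) - p k) (by simp [sum_sub_distrib, hsum]) (by simp)
    (sub_ne_zero.2 hi.symm)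
  replace hj : π j = π i := (mem_filter.1 hj).2
  simp only [hj] at hneg
  have hij : i ≠ j := by rintro rfl; nlinarith
  refine ⟨Function.update (Function.update p i (q (π i))) j (p i + p j - q (π i)),
    fun k => ?_, fun c => ?_, ?_, ?_⟩
  · obtain ⟨hi0, hi1⟩ := hp i
    obtain ⟨hj0, hj1⟩ := hp j
    have hmid : q (π i) ∈ Set.Icc 0 1 ∧ p i + p j - q (π i) ∈ Set.Icc 0 1 := by
      rcases mul_neg_iff.1 hneg with h | h <;> refine ⟨⟨?_, ?_⟩, ?_, ?_⟩ <;> linarith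
    simp only [Function.update_apply]
    split_ifs
    exacts [hmid.2, hmid.1, hp k]
  · rw [sum_update_update_of_add_eq hij (by simp [hj]) p (by ring), hsum]
  · refine card_lt_card ((ssubset_iff_of_subset fun k hk => ?_).2
      ⟨i, by simpa using hi, by simp [Function.update_of_ne hij]⟩)
    simp only [mem_filter, mem_univ, true_and, Function.update_apply] at hk ⊢
    split_ifs at hk with hkj hki
    · subst hkj
      rintro h
      rw [h, hj, sub_self, mul_zero] at hneg
      exact lt_irrefl 0 hneg
    · exact absurd (by rw [hki]) hk
    · exact hk
  · have hpij : Function.update (Function.update p i (p i)) j (p j) = p := by simp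
    conv_lhs => rw [← hpij]
    exact poissonBinomialExpectation_update_update_le hψ hij hp (by ring) (by nlinarith)

theorem poissonBinomialExpectation_le_of_fiberwise_sum_eq
    (hψ : ∀ m, 2 * ψ (m + 1) ≤ ψ m + ψ (m + 2)) (hp : ∀ k, p k ∈ Set.Icc 0 1)
    (hsum : ∀ c, ∑ j with π j = c, p j = ∑ j with π j = c, q (π j)) :
    poissonBinomialExpectation ψ p ≤ poissonBinomialExpectation ψ (fun j => q (π j)) := by
  induction h : #{j | p j ≠ q (π j)} using Nat.strong_induction_on generalizing p with
  | _ d ih =>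
    by_cases hpq : ∀ j, p j = q (π j)
    · rw [funext hpq]
    push Not at hpq
    obtain ⟨i, hi⟩ := hpq
    obtain ⟨p', hp', hsum', hcard, hle⟩ := exists_transfer_step hψ hp hsum hi
    exact hle.trans (ih _ (h ▸ hcard) hp' hsum' rfl)

end Majorization

theorem ConvexOn.two_mul_le_add_natCast_mul {φ : ℝ → ℝ} (hφ : ConvexOn ℝ Set.univ φ) (c : ℝ)
    (m : ℕ) : 2 * φ (c * ↑(m + 1)) ≤ φ (c * ↑m) + φ (c * ↑(m + 2)) := by
  have h := hφ.2 (Set.mem_univ (c * m)) (Set.mem_univ (c * (m + 2)))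
    (by norm_num : (0 : ℝ) ≤ 1 / 2) (by norm_num : (0 : ℝ) ≤ 1 / 2) (by norm_num)
  simp only [smul_eq_mul] at h
  rw [show 1 / 2 * (c * m) + 1 / 2 * (c * (m + 2)) = c * (m + 1) by ring] at h
  push_cast
  linarith

theorem integral_mem_Icc_of_mem_Icc {α : Type*} [MeasurableSpace α] {ν : Measure α}
    [IsProbabilityMeasure ν] {f : α → ℝ} (hf : Measurable f) (hf01 : ∀ u, f u ∈ Set.Icc 0 1) :
    ∫ u, f u ∂ν ∈ Set.Icc 0 1 := by
  refine ⟨integral_nonneg fun u => (hf01 u).1, ?_⟩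
  simpa using integral_mono (Integrable.of_mem_Icc 0 1 hf.aemeasurable (ae_of_all _ hf01))
    (integrable_const (μ := ν) 1) fun u => (hf01 u).2

theorem measurableSet_setOf_snd_le {α : Type*} [MeasurableSpace α] {f : α → ℝ}
    (hf : Measurable f) : MeasurableSet {x : α × ℝ | x.2 ≤ f x.1} :=
  measurableSet_le measurable_snd (hf.comp measurable_fst)

theorem measureReal_prod_restrict_Icc_setOf_snd_le {α : Type*} [MeasurableSpace α]
    {ν : Measure α} [IsFiniteMeasure ν] {f : α → ℝ} (hf : Measurable f)
    (hf01 : ∀ u, f u ∈ Set.Icc 0 1) :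
    (ν.prod (volume.restrict (Set.Icc (0 : ℝ) 1))).real {x | x.2 ≤ f x.1} = ∫ u, f u ∂ν := by
  have hS := measurableSet_setOf_snd_le hf
  have hslice (u : α) : volume.restrict (Set.Icc (0 : ℝ) 1) (Prod.mk u ⁻¹' {x | x.2 ≤ f x.1}) =
      ENNReal.ofReal (f u) := by
    have hcut : Prod.mk u ⁻¹' {x | x.2 ≤ f x.1} ∩ Set.Icc 0 1 = Set.Icc 0 (f u) := by
      ext t
      simp only [Set.mem_inter_iff, Set.mem_preimage, Set.mem_ofPred_eq, Set.mem_Icc]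
      exact ⟨fun ⟨ht, h0, _⟩ => ⟨h0, ht⟩, fun ⟨h0, ht⟩ => ⟨ht, h0, ht.trans (hf01 u).2⟩⟩
    rw [Measure.restrict_apply (measurable_prodMk_left hS), hcut, Real.volume_Icc, sub_zero]
  rw [measureReal_def, Measure.prod_apply hS, lintegral_congr hslice,
    ← ofReal_integral_eq_lintegral_ofReal
      (Integrable.of_mem_Icc 0 1 hf.aemeasurable (ae_of_all _ hf01))
      (ae_of_all _ fun u => (hf01 u).1),
    ENNReal.toReal_ofReal (integral_nonneg fun u => (hf01 u).1)]

namespace StratPart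

variable {𝔘 : Type*} [MeasurableSpace 𝔘] {μ : Measure 𝔘} {n : ℕ}

theorem blockCard_pos (B : StratPart 𝔘 μ n) (i : Fin B.b) : 0 < B.blockCard i := by
  obtain ⟨j, rfl⟩ := B.idx_surj i
  exact card_pos.2 ⟨j, by simp⟩

theorem measure_sets_ne_zero (B : StratPart 𝔘 μ n) (i : Fin B.b) : μ (B.sets i) ≠ 0 := by
  rw [B.prob i, ← blockCard]
  exact (ENNReal.div_pos (mod_cast (B.blockCard_pos i).ne') (ENNReal.natCast_ne_top n)).ne'

instance isProbabilityMeasure_cond [IsFiniteMeasure μ] (B : StratPart 𝔘 μ n) (i : Fin B.b) :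
    IsProbabilityMeasure μ[|B.sets i] :=
  cond_isProbabilityMeasure (B.measure_sets_ne_zero i)

theorem blockCard_mul_integral_cond (B : StratPart 𝔘 μ n) (f : 𝔘 → ℝ) (i : Fin B.b) :
    (B.blockCard i : ℝ) * ∫ u, f u ∂μ[|B.sets i] = n * ∫ u in B.sets i, f u ∂μ := by
  obtain ⟨j, -⟩ := B.idx_surj i
  have hn : (n : ℝ) ≠ 0 := by have := Fin.pos j; positivity
  have hk : (B.blockCard i : ℝ) ≠ 0 := by have := B.blockCard_pos i; positivity
  rw [ProbabilityTheory.cond, integral_smul_measure, B.prob i, ENNReal.toReal_inv,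
    ENNReal.toReal_div, ENNReal.toReal_natCast, ENNReal.toReal_natCast, smul_eq_mul, ← blockCard]
  field_simp

theorem sum_integral_cond_of_idx_mem (B : StratPart 𝔘 μ n) {f : 𝔘 → ℝ} (hf : Integrable f μ)
    (L : Finset (Fin B.b)) :
    ∑ j with B.idx j ∈ L, ∫ u, f u ∂μ[|B.sets (B.idx j)] =
      n * ∫ u in ⋃ l ∈ L, B.sets l, f u ∂μ := by
  rw [integral_biUnion_finset L (fun l _ => B.meas l) (B.disj.set_pairwise _)
      (fun l _ => hf.integrableOn), mul_sum,
    ← sum_fiberwise_of_maps_to' (s := {j | B.idx j ∈ L}) (t := L) (g := B.idx)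
      (fun j hj => (mem_filter.1 hj).2) (fun l => ∫ u, f u ∂μ[|B.sets l])]
  refine sum_congr rfl fun l hl => ?_
  rw [sum_const, filter_filter, nsmul_eq_mul, ← blockCard_mul_integral_cond, blockCard]
  congr 3
  ext j
  simp only [mem_filter, mem_univ, true_and, and_iff_right_iff_imp]
  rintro rfl
  exact hl

theorem sets_eq_biUnion_of_subset (C B : StratPart 𝔘 μ n) {ρ : Fin B.b → Fin C.b}
    (hρ : ∀ l, B.sets l ⊆ C.sets (ρ l)) (i : Fin C.b) :
    C.sets i = ⋃ l ∈ ({l | ρ l = i} : Finset (Fin B.b)), B.sets l := by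
  refine subset_antisymm (fun u hu => ?_) ?_
  · obtain ⟨l, hl⟩ := Set.mem_iUnion.1 (B.cover.symm ▸ Set.mem_univ u)
    have hρl : ρ l = i := by
      by_contra hne
      exact Set.disjoint_left.1 (C.disj hne) (hρ l hl) hu
    exact Set.mem_biUnion (by simpa using hρl) hl
  · simp only [Set.iUnion_subset_iff, mem_filter, mem_univ, true_and]
    rintro l rfl
    exact hρ l

end StratPart

namespace IsCensoredStratSample

variable {Ω 𝔘 : Type*} [MeasurableSpace Ω] [MeasurableSpace 𝔘] {μ : Measure 𝔘} {n : ℕ}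
  {B : StratPart 𝔘 μ n} {P : Measure Ω} {V : Fin n → Ω → 𝔘}
  {T : Fin n → Ω → ℝ} {f : 𝔘 → ℝ}

theorem measureReal_snd_le (h : IsCensoredStratSample B P V T) (hf : Measurable f)
    (hf01 : ∀ u, f u ∈ Set.Icc 0 1) (j : Fin n) :
    P.real ((fun ω => (V j ω, T j ω)) ⁻¹' {x | x.2 ≤ f x.1}) =
      ∫ u, f u ∂μ[|B.sets (B.idx j)] := by
  rw [← map_measureReal_apply ((h.1 j).prodMk (h.2.1 j)) (measurableSet_setOf_snd_le hf),
    h.2.2.2 j, measureReal_prod_restrict_Icc_setOf_snd_le hf hf01]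

theorem integral_comp_WCI (h : IsCensoredStratSample B P V T) (hf : Measurable f)
    (hf01 : ∀ u, f u ∈ Set.Icc 0 1) (φ : ℝ → ℝ) :
    ∫ ω, φ (WCI f V T ω) ∂P =
      poissonBinomialExpectation (fun m => φ ((n : ℝ)⁻¹ * m))
        (fun j => ∫ u, f u ∂μ[|B.sets (B.idx j)]) := by
  classical
  have hWCI (ω : Ω) :
      WCI f V T ω = (n : ℝ)⁻¹ * #{j | (V j ω, T j ω) ∈ {x | x.2 ≤ f x.1}} := by
    simp only [WCI, natCast_card_filter, Set.mem_ofPred_eq]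
  simp only [hWCI]
  rw [iIndepFun.integral_card_mem_eq (fun j => (h.1 j).prodMk (h.2.1 j)) h.2.2.1
    (measurableSet_setOf_snd_le hf) (fun m => φ ((n : ℝ)⁻¹ * m))]
  simp only [h.measureReal_snd_le hf hf01]

end IsCensoredStratSample

theorem censored_integral_convex_order_general
    {Ω 𝔘 : Type*} [MeasurableSpace Ω] [MeasurableSpace 𝔘]
    (μ : Measure 𝔘) [IsProbabilityMeasure μ]
    (P : Measure Ω)
    (n : ℕ) (f : 𝔘 → ℝ) (hf : Measurable f)
    (hf01 : ∀ u, f u ∈ Set.Icc (0:ℝ) 1)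
    (C B : StratPart 𝔘 μ n) (href : C.Refines B)
    (VB VC : Fin n → Ω → 𝔘) (TB TC : Fin n → Ω → ℝ)
    (hB : IsCensoredStratSample B P VB TB)
    (hC : IsCensoredStratSample C P VC TC) :
    ∀ φ : ℝ → ℝ, ConvexOn ℝ Set.univ φ →
      Integrable (fun ω => φ (WCI f VB TB ω)) P →
      Integrable (fun ω => φ (WCI f VC TC ω)) P →
      ∫ ω, φ (WCI f VB TB ω) ∂P ≤ ∫ ω, φ (WCI f VC TC ω) ∂P := by
  intro φ hφ _ _
  obtain ⟨ρ, hρ, hidx⟩ := href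
  have hint : Integrable f μ := .of_mem_Icc 0 1 hf.aemeasurable (ae_of_all _ hf01)
  rw [hB.integral_comp_WCI hf hf01, hC.integral_comp_WCI hf hf01]
  refine poissonBinomialExpectation_le_of_fiberwise_sum_eq (π := C.idx)
    (q := fun i => ∫ u, f u ∂μ[|C.sets i]) (hφ.two_mul_le_add_natCast_mul _)
    (fun j => integral_mem_Icc_of_mem_Icc hf hf01) fun i => ?_
  have hB' := B.sum_integral_cond_of_idx_mem hint {l | ρ l = i}
  have hC' := C.sum_integral_cond_of_idx_mem hint {i}
  rw [← C.sets_eq_biUnion_of_subset B hρ i] at hB'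
  simp only [mem_filter, mem_univ, true_and, mem_singleton, ← hidx,
    Set.iUnion_iUnion_eq_left] at hB' hC'
  rw [hB', hC']

/-- Theorem 4.3: with censored observations, if `𝒞 ≤_ref 𝓑` then
`W_CI^𝓑 ≤_cx W_CI^𝒞`, i.e. `E[φ(W_CI^𝓑)] ≤ E[φ(W_CI^𝒞)]` for every convex `φ : ℝ → ℝ`
for which both expectations exist. -/
theorem censored_integral_convex_order
    {Ω 𝔘 : Type*} [MeasurableSpace Ω] [MeasurableSpace 𝔘]
    (μ : Measure 𝔘) [IsProbabilityMeasure μ] [NullSingletonClass μ]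
    (P : Measure Ω) [IsProbabilityMeasure P]
    (n : ℕ) [NeZero n] (f : 𝔘 → ℝ) (hf : Measurable f)
    (hf01 : ∀ u, f u ∈ Set.Icc (0:ℝ) 1)
    (C B : StratPart 𝔘 μ n) (href : C.Refines B)
    (VB VC : Fin n → Ω → 𝔘) (TB TC : Fin n → Ω → ℝ)
    (hB : IsCensoredStratSample B P VB TB)
    (hC : IsCensoredStratSample C P VC TC) :
    ∀ φ : ℝ → ℝ, ConvexOn ℝ Set.univ φ →
      Integrable (fun ω => φ (WCI f VB TB ω)) P →
      Integrable (fun ω => φ (WCI f VC TC ω)) P →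
      ∫ ω, φ (WCI f VB TB ω) ∂P ≤ ∫ ω, φ (WCI f VC TC ω) ∂P :=
  censored_integral_convex_order_general μ P n f hf hf01 C B href VB VC TB TC hB hC
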